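/- arXiv:1006.0316 — 5 statements merged into one kernel-verified Lean document; each statement's English description precedes it below -/
import Mathlib

section
/- For every orientation Γ⃗ of a simply laced Dynkin diagram Γ with n vertices, the monoid KH(Γ⃗) has exactly 2^n idempotent elements. -/
open FreeMonoid SimpleGraph

/-- The defining relations of a Hecke-Kiselman monoid associated with the
mixed graph encoded by the binary relation `Θ`. -/
inductive HKRel {ι : Type*} (Θ : ι → ι → Prop) : FreeMonoid ι → FreeMonoid ι → Prop
  | idem (i : ι) : HKRel Θ (of i * of i) (of i)
  | comm (i j : ι) (h₁ : ¬ Θ i j) (h₂ : ¬ Θ j i) :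
      HKRel Θ (of i * of j) (of j * of i)
  | braid (i j : ι) (h₁ : Θ i j) (h₂ : Θ j i) :
      HKRel Θ (of i * of j * of i) (of j * of i * of j)
  | kisel (i j : ι) (h₁ : Θ i j) (h₂ : ¬ Θ j i) :
      HKRel Θ (of i * of j * of i) (of i * of j)
  | kisel' (i j : ι) (h₁ : Θ i j) (h₂ : ¬ Θ j i) :
      HKRel Θ (of j * of i * of j) (of i * of j)

/-- The Hecke-Kiselman monoid of the mixed graph encoded by `Θ`. -/
abbrev HK {ι : Type*} (Θ : ι → ι → Prop) : Type _ := (conGen (HKRel Θ)).Quotient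

/-- The canonical idempotent generators of a Hecke-Kiselman monoid. -/
def HK.gen {ι : Type*} (Θ : ι → ι → Prop) (i : ι) : HK Θ :=
  (conGen (HKRel Θ)).mk' (FreeMonoid.of i)

/-- Dynkin diagram of type `D n` (meaningful for `4 ≤ n`). -/
def typeD (n : ℕ) : SimpleGraph (Fin n) :=
  SimpleGraph.fromRel (fun i j =>
    ((i : ℕ) + 1 = (j : ℕ) ∧ 1 ≤ (i : ℕ)) ∨ ((i : ℕ) = 0 ∧ (j : ℕ) = 2))

/-- Dynkin diagram of type `E n` (meaningful for `n = 6, 7, 8`). -/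
def typeE (n : ℕ) : SimpleGraph (Fin n) :=
  SimpleGraph.fromRel (fun i j =>
    ((i : ℕ) + 1 = (j : ℕ) ∧ 1 ≤ (i : ℕ)) ∨ ((i : ℕ) = 0 ∧ (j : ℕ) = 3))

/-- A graph is of type `A`, `D` or `E` if it is isomorphic to one of the
simply laced Dynkin diagrams `A n` (`n ≥ 1`), `D n` (`n ≥ 4`), `E6`, `E7`, `E8`. -/
def IsADE {V : Type*} (G : SimpleGraph V) : Prop :=
  (∃ n, 1 ≤ n ∧ Nonempty (G ≃g pathGraph n)) ∨
  (∃ n, 4 ≤ n ∧ Nonempty (G ≃g typeD n)) ∨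
  (∃ n, (n = 6 ∨ n = 7 ∨ n = 8) ∧ Nonempty (G ≃g typeE n))

/-- A simply laced Dynkin diagram: a simple graph each of whose connected
components is of type `A`, `D` or `E`. -/
def IsSimplyLacedDynkin {V : Type*} (G : SimpleGraph V) : Prop :=
  ∀ c : G.ConnectedComponent, IsADE (G.induce c.supp)

/-- `Θ` is an orientation of the simple graph `G`: every edge of `G` is given
exactly one direction. -/
def IsOrientation {V : Type*} (G : SimpleGraph V) (Θ : V → V → Prop) : Prop :=
  (∀ i j, G.Adj i j ↔ (Θ i j ∨ Θ j i)) ∧ (∀ i j, Θ i j → ¬ Θ j i)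

/-!
Every nonempty set `S` of vertices of an oriented Dynkin diagram contains a sink `i`, a vertex
with no arrow `i → j` inside `S`, because Dynkin diagrams are forests. For such a sink,
`ε_i u ε_i = u ε_i` for every word `u` in the letters of `S`. So if `i` is a sink of the letters
of a word `w`, every occurrence of `i` but the last can be deleted, and if `i` occurs once,
`w = u ε_i v`, then `w ^ (n + 2) = u (v u) ^ (n + 1) ε_i v`. By induction on the length, some
power of `v u` is the zero of the submonoid generated by the letters other than `i`, and then
`(v u) ^ (n + 1) ε_i`, hence also `w ^ (n + 2)`, is the zero of the submonoid generated by all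
letters of `w`. Zeros are unique, so an idempotent is the zero of the submonoid generated by its
support, and the idempotents correspond to the finite sets of vertices.
-/

section Monoid

variable {M : Type*} [Monoid M]

def Submonoid.IsZeroElem (P : Submonoid M) (z : M) : Prop :=
  z ∈ P ∧ ∀ x ∈ P, x * z = z ∧ z * x = z

namespace Submonoid.IsZeroElem

variable {P : Submonoid M} {z z' : M}

theorem eq (hz : P.IsZeroElem z) (hz' : P.IsZeroElem z') : z = z' :=
  (hz.2 z' hz'.1).2.symm.trans (hz'.2 z hz.1).1

theorem isIdempotentElem (hz : P.IsZeroElem z) : IsIdempotentElem z :=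
  (hz.2 z hz.1).1

theorem of_mem_closure {s : Set M} (hz : z ∈ Submonoid.closure s)
    (h : ∀ a ∈ s, a * z = z ∧ z * a = z) : (Submonoid.closure s).IsZeroElem z := by
  refine ⟨hz, fun x hx => ?_⟩
  induction hx using Submonoid.closure_induction with
  | mem a ha => exact h a ha
  | one => simp
  | mul x y _ _ hx hy =>
    exact ⟨by rw [mul_assoc, hy.1, hx.1], by rw [← mul_assoc, hx.2, hy.2]⟩

end Submonoid.IsZeroElem

def IsIdempotentElem.absorbedSubmonoid {e : M} (he : IsIdempotentElem e) : Submonoid M where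
  carrier := {u | e * u * e = u * e}
  one_mem' := by simp [he.eq]
  mul_mem' {u v} (hu : e * u * e = u * e) (hv : e * v * e = v * e) := by
    calc e * (u * v) * e = e * u * (e * v * e) := by rw [hv]; simp only [mul_assoc]
      _ = e * u * e * (v * e) := by simp only [mul_assoc]
      _ = u * (e * v * e) := by rw [hu]; simp only [mul_assoc]
      _ = u * v * e := by rw [hv, mul_assoc]

theorem pow_succ_mul_mul_eq {a b e : M} (h : e * (b * a) * e = b * a * e) (n : ℕ) :
    (a * e * b) ^ (n + 1) = a * (b * a) ^ n * e * b := by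
  induction n with
  | zero => simp
  | succ n ih =>
    calc (a * e * b) ^ (n + 1 + 1) = a * (b * a) ^ n * (e * (b * a) * e) * b := by
          rw [pow_succ, ih]; simp only [mul_assoc]
      _ = a * (b * a) ^ (n + 1) * e * b := by rw [h, pow_succ]; simp only [mul_assoc]

end Monoid

theorem FreeMonoid.exists_eq_mul_of_mul_of_mem {α : Type*} {i : α} {w : FreeMonoid α}
    (h : i ∈ w) : ∃ u v, w = u * of i * v ∧ i ∉ u := by
  obtain ⟨s, t, rfl, hs⟩ := List.eq_append_cons_of_mem h
  exact ⟨ofList s, ofList t, show s ++ i :: t = s ++ [i] ++ t by simp, hs⟩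

def HasSinks {V : Type*} (Θ : V → V → Prop) : Prop :=
  ∀ S : Finset V, S.Nonempty → ∃ i ∈ S, ∀ j ∈ S, ¬ Θ i j

namespace HK

variable {V : Type*} (Θ : V → V → Prop)

def mk : FreeMonoid V →* HK Θ := (conGen (HKRel Θ)).mk'

abbrev parabolic (S : Set V) : Submonoid (HK Θ) := Submonoid.closure (gen Θ '' S)

variable {Θ}

theorem mk_of (i : V) : mk Θ (of i) = gen Θ i := rfl

theorem mk_surjective : Function.Surjective (mk Θ) := Con.mk'_surjective

theorem mk_eq_mk_of_hkRel {a b : FreeMonoid V} (h : HKRel Θ a b) : mk Θ a = mk Θ b :=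
  (Con.eq _).2 (ConGen.Rel.of _ _ h)

theorem gen_isIdempotentElem (i : V) : IsIdempotentElem (gen Θ i) := by
  show gen Θ i * gen Θ i = gen Θ i
  simpa only [map_mul, mk_of] using mk_eq_mk_of_hkRel (HKRel.idem (Θ := Θ) i)

theorem gen_mul_comm {i j : V} (h₁ : ¬ Θ i j) (h₂ : ¬ Θ j i) :
    gen Θ i * gen Θ j = gen Θ j * gen Θ i := by
  simpa only [map_mul, mk_of] using mk_eq_mk_of_hkRel (HKRel.comm i j h₁ h₂)

theorem gen_kisel {i j : V} (h₁ : Θ i j) (h₂ : ¬ Θ j i) :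
    gen Θ i * gen Θ j * gen Θ i = gen Θ i * gen Θ j := by
  simpa only [map_mul, mk_of] using mk_eq_mk_of_hkRel (HKRel.kisel i j h₁ h₂)

theorem gen_kisel' {i j : V} (h₁ : Θ i j) (h₂ : ¬ Θ j i) :
    gen Θ j * gen Θ i * gen Θ j = gen Θ i * gen Θ j := by
  simpa only [map_mul, mk_of] using mk_eq_mk_of_hkRel (HKRel.kisel' i j h₁ h₂)

theorem mk_mem_parabolic {S : Set V} {w : FreeMonoid V} (h : ∀ j ∈ w, j ∈ S) :
    mk Θ w ∈ parabolic Θ S := by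
  induction w using FreeMonoid.inductionOn' with
  | one => exact one_mem _
  | of_mul x xs ih =>
    rw [map_mul]
    exact mul_mem (Submonoid.subset_closure ⟨x, h x (by simp), rfl⟩)
      (ih fun j hj => h j (by simp [hj]))

theorem parabolic_le_absorbedSubmonoid (i : V) :
    parabolic Θ {k | ¬ Θ i k} ≤ (gen_isIdempotentElem (Θ := Θ) i).absorbedSubmonoid := by
  rw [Submonoid.closure_le]
  rintro _ ⟨k, hik, rfl⟩
  show gen Θ i * gen Θ k * gen Θ i = gen Θ k * gen Θ i
  by_cases hki : Θ k i
  · exact gen_kisel' hki hik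
  · rw [gen_mul_comm hik hki, mul_assoc, gen_isIdempotentElem i]

theorem gen_mul_mk_of_mem {i : V} {w : FreeMonoid V} (hi : i ∈ w) (hw : ∀ k ∈ w, ¬ Θ i k) :
    gen Θ i * mk Θ w = mk Θ w := by
  obtain ⟨u, v, rfl, -⟩ := FreeMonoid.exists_eq_mul_of_mul_of_mem hi
  have hu : gen Θ i * mk Θ u * gen Θ i = mk Θ u * gen Θ i :=
    parabolic_le_absorbedSubmonoid i (mk_mem_parabolic fun k hk => hw k (by simp [hk]))
  simp only [map_mul, mk_of, ← mul_assoc, hu]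

theorem isZeroElem_mul_gen {T : Set V} {y : HK Θ} {i : V} (hy : (parabolic Θ T).IsZeroElem y)
    (hi : ∀ j ∈ T, ¬ Θ i j) : (parabolic Θ (insert i T)).IsZeroElem (y * gen Θ i) := by
  have hyi : gen Θ i * y * gen Θ i = y * gen Θ i :=
    parabolic_le_absorbedSubmonoid i (Submonoid.closure_mono (Set.image_mono hi) hy.1)
  refine .of_mem_closure (mul_mem (Submonoid.closure_mono (by gcongr; simp) hy.1)
    (Submonoid.subset_closure ⟨i, by simp, rfl⟩)) ?_
  rintro _ ⟨j, hj, rfl⟩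
  rcases Set.mem_insert_iff.1 hj with rfl | hjT
  · exact ⟨by rw [← mul_assoc, hyi], by rw [mul_assoc, gen_isIdempotentElem]⟩
  have hjy := hy.2 _ (Submonoid.subset_closure ⟨j, hjT, rfl⟩)
  refine ⟨by rw [← mul_assoc, hjy.1], ?_⟩
  by_cases hji : Θ j i
  · calc y * gen Θ i * gen Θ j = y * gen Θ j * gen Θ i * gen Θ j := by rw [hjy.2]
      _ = y * (gen Θ j * gen Θ i * gen Θ j) := by simp only [mul_assoc]
      _ = y * gen Θ i := by rw [gen_kisel hji (hi j hjT), ← mul_assoc, hjy.2]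
  · rw [mul_assoc, gen_mul_comm (hi j hjT) hji, ← mul_assoc, hjy.2]

section Support

variable [DecidableEq V]

variable (Θ) in
def support (x : HK Θ) : Finset V :=
  Con.liftOn x FreeMonoid.symbols fun a b h => by
    induction h with
    | of a b h => cases h <;> ext <;> simp [or_comm]
    | refl => rfl
    | symm _ ih => exact ih.symm
    | trans _ _ ih ih' => exact ih.trans ih'
    | mul _ _ ih ih' => simp only [symbols_mul, ih, ih']

theorem support_mk (w : FreeMonoid V) : support Θ (mk Θ w) = w.symbols := rfl

theorem support_mul (x y : HK Θ) : support Θ (x * y) = support Θ x ∪ support Θ y := by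
  obtain ⟨u, rfl⟩ := mk_surjective x
  obtain ⟨v, rfl⟩ := mk_surjective y
  rw [← map_mul]
  exact symbols_mul

theorem support_pow_succ (x : HK Θ) (n : ℕ) : support Θ (x ^ (n + 1)) = support Θ x := by
  induction n with
  | zero => rw [pow_one]
  | succ n ih => rw [pow_succ, support_mul, ih, Finset.union_self]

theorem exists_pow_succ_isZeroElem (hΘ : HasSinks Θ) (w : FreeMonoid V) :
    ∃ n, (parabolic Θ w.symbols).IsZeroElem (mk Θ w ^ (n + 1)) := by
  induction hlen : w.length using Nat.strong_induction_on generalizing w with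
  | _ len ih =>
  subst hlen
  rcases w.symbols.eq_empty_or_nonempty with hempty | hne
  · have hw : mk Θ w ∈ parabolic Θ w.symbols := mk_mem_parabolic fun j hj => by simpa using hj
    exact ⟨0, .of_mem_closure (pow_mem hw _) (by simp [hempty])⟩
  obtain ⟨i, hi, hsink⟩ := hΘ _ hne
  obtain ⟨u, v, rfl, hiu⟩ := FreeMonoid.exists_eq_mul_of_mul_of_mem (mem_symbols.1 hi)
  have hsink' : ∀ k ∈ v * u, ¬ Θ i k := fun k hk => hsink k (by
    simp only [mem_symbols, mem_mul, mem_of] at hk ⊢; tauto)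
  by_cases hiv : i ∈ v
  · obtain ⟨n, hn⟩ := ih (u * v).length (by simp [length_mul, length_of]) (u * v) rfl
    have hdel : mk Θ (u * of i * v) = mk Θ (u * v) := by
      rw [map_mul, map_mul, map_mul, mk_of, mul_assoc,
        gen_mul_mk_of_mem hiv fun k hk => hsink' k (mem_mul.2 (.inl hk))]
    have hsymb : (u * of i * v).symbols = (u * v).symbols := by
      ext k; by_cases hk : k = i <;> simp [hk, hiv]
    exact ⟨n, by rwa [hdel, hsymb]⟩
  obtain ⟨n, hn⟩ := ih (v * u).length (by simp only [length_mul, length_of]; omega) (v * u) rfl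
  set P := parabolic Θ (insert i ((v * u).symbols : Set V))
  have hsymb : ((u * of i * v).symbols : Set V) = insert i ((v * u).symbols : Set V) := by
    ext k
    simp only [Finset.mem_coe, mem_symbols, mem_mul, mem_of, Set.mem_insert_iff]
    tauto
  have hz : P.IsZeroElem (mk Θ (v * u) ^ (n + 1) * gen Θ i) :=
    isZeroElem_mul_gen hn fun j hj => hsink' j (by simpa using hj)
  have habs : gen Θ i * mk Θ (v * u) * gen Θ i = mk Θ (v * u) * gen Θ i :=
    parabolic_le_absorbedSubmonoid i (mk_mem_parabolic hsink')
  have hu : mk Θ u ∈ P := mk_mem_parabolic fun k hk => by simp [hk]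
  have hv : mk Θ v ∈ P := mk_mem_parabolic fun k hk => by simp [hk]
  refine ⟨n + 1, ?_⟩
  rw [hsymb, map_mul, map_mul, mk_of, pow_succ_mul_mul_eq (by rwa [← map_mul]) (n + 1),
    ← map_mul, mul_assoc (mk Θ u), (hz.2 _ hu).1, (hz.2 _ hv).2]
  exact hz

theorem isZeroElem_parabolic_support (hΘ : HasSinks Θ) {x : HK Θ} (hx : IsIdempotentElem x) :
    (parabolic Θ (support Θ x)).IsZeroElem x := by
  obtain ⟨w, rfl⟩ := mk_surjective x
  obtain ⟨n, hn⟩ := exists_pow_succ_isZeroElem hΘ w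
  rwa [hx.pow_succ_eq] at hn

theorem exists_isZeroElem_parabolic (hΘ : HasSinks Θ) (S : Finset V) :
    ∃ z, (parabolic Θ S).IsZeroElem z ∧ support Θ z = S := by
  obtain ⟨n, hn⟩ := exists_pow_succ_isZeroElem hΘ (ofList S.toList)
  have hS : (ofList S.toList).symbols = S := Finset.toList_toFinset S
  rw [hS] at hn
  exact ⟨_, hn, by rw [support_pow_succ, support_mk, hS]⟩

noncomputable def idempotentsEquivFinset (hΘ : HasSinks Θ) :
    {x : HK Θ // IsIdempotentElem x} ≃ Finset V :=
  Equiv.ofBijective (fun x => support Θ x.1)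
    ⟨fun x y (hxy : support Θ x = support Θ y) => Subtype.ext <|
        (isZeroElem_parabolic_support hΘ x.2).eq (hxy ▸ isZeroElem_parabolic_support hΘ y.2),
      fun S => by
        obtain ⟨z, hz, rfl⟩ := exists_isZeroElem_parabolic hΘ S
        exact ⟨⟨z, hz.isIdempotentElem⟩, rfl⟩⟩

end Support

end HK

namespace SimpleGraph

variable {V W : Type*} {G : SimpleGraph V}

/-- A certificate that `G` is a forest, easy to check on the Dynkin diagrams. -/
def HasParentRanking (G : SimpleGraph V) : Prop :=
  ∃ (rank : V → ℕ) (parent : V → V),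
    ∀ i j, G.Adj i j → rank i ≠ rank j ∧ (rank j < rank i → j = parent i)

theorem HasParentRanking.of_iso {H : SimpleGraph W} (φ : G ≃g H) (h : H.HasParentRanking) :
    G.HasParentRanking := by
  obtain ⟨rank, parent, h⟩ := h
  refine ⟨rank ∘ φ, φ.symm ∘ parent ∘ φ, fun i j hij => ?_⟩
  obtain ⟨hne, hparent⟩ := h _ _ (φ.map_adj_iff.2 hij)
  exact ⟨hne, fun hlt => by simp [← hparent hlt]⟩

theorem hasParentRanking_pathGraph (n : ℕ) : (pathGraph n).HasParentRanking := by
  refine ⟨fun i => i, fun i => ⟨i - 1, by omega⟩, fun i j hij => ?_⟩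
  rw [pathGraph_adj] at hij
  dsimp only
  exact ⟨by omega, fun hlt => Fin.ext (by simp only; omega)⟩

theorem hasParentRanking_fromRel_branch (n b : ℕ) (hb : b < n) :
    (fromRel fun i j : Fin n =>
      ((i : ℕ) + 1 = j ∧ 1 ≤ (i : ℕ)) ∨ ((i : ℕ) = 0 ∧ (j : ℕ) = b)).HasParentRanking := by
  refine ⟨fun i => if (i : ℕ) = 0 then n else i,
    fun i => if (i : ℕ) = 0 then ⟨b, hb⟩ else ⟨i - 1, by omega⟩, fun i j hij => ?_⟩
  obtain ⟨hne, hij⟩ := (fromRel_adj _ _ _).1 hij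
  have := Fin.val_ne_of_ne hne
  dsimp only
  refine ⟨by split_ifs <;> omega, fun hlt => ?_⟩
  split_ifs at hlt ⊢ <;> ext <;> simp only <;> omega

theorem IsADE.hasParentRanking (h : IsADE G) : G.HasParentRanking := by
  rcases h with ⟨n, -, ⟨φ⟩⟩ | ⟨n, hn, ⟨φ⟩⟩ | ⟨n, hn, ⟨φ⟩⟩
  · exact .of_iso φ (hasParentRanking_pathGraph n)
  · exact .of_iso φ (hasParentRanking_fromRel_branch n 2 (by omega))
  · exact .of_iso φ (hasParentRanking_fromRel_branch n 3 (by omega))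

theorem hasParentRanking_of_forall_connectedComponent
    (h : ∀ c : G.ConnectedComponent, (G.induce c.supp).HasParentRanking) :
    G.HasParentRanking := by
  choose rank parent h using h
  refine ⟨fun v => rank _ ⟨v, rfl⟩, fun v => parent _ ⟨v, rfl⟩, fun i j hij => ?_⟩
  have hc : G.connectedComponentMk j = G.connectedComponentMk i :=
    (ConnectedComponent.sound hij.reachable).symm
  have hrank :
      ∀ c (hj : G.connectedComponentMk j = c), rank c ⟨j, hj⟩ = rank _ ⟨j, rfl⟩ := by
    rintro c rfl; rfl
  obtain ⟨hne, hparent⟩ := h _ ⟨i, rfl⟩ ⟨j, hc⟩ hij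
  dsimp only
  rw [← hrank _ hc]
  exact ⟨hne, fun hlt => congrArg Subtype.val (hparent hlt)⟩

theorem HasParentRanking.exists_mem_subsingleton_neighborSet (h : G.HasParentRanking)
    (S : Finset V) (hS : S.Nonempty) : ∃ i ∈ S, (G.neighborSet i ∩ S).Subsingleton := by
  obtain ⟨rank, parent, h⟩ := h
  obtain ⟨i, hi, hmax⟩ := S.exists_max_image rank hS
  have eq_parent : ∀ j ∈ G.neighborSet i ∩ S, j = parent i := fun j ⟨hij, hj⟩ =>
    (h i j hij).2 ((hmax j hj).lt_of_ne (h i j hij).1.symm)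
  exact ⟨i, hi, fun j hj k hk => (eq_parent j hj).trans (eq_parent k hk).symm⟩

end SimpleGraph

theorem IsOrientation.hasSinks {V : Type*} {G : SimpleGraph V} {Θ : V → V → Prop}
    (hΘ : IsOrientation G Θ)
    (hG : ∀ S : Finset V, S.Nonempty → ∃ i ∈ S, (G.neighborSet i ∩ S).Subsingleton) :
    HasSinks Θ := by
  classical
  intro S hS
  induction S using Finset.strongInduction with
  | H S ih =>
  obtain ⟨i, hi, hleaf⟩ := hG S hS
  by_cases hsink : ∃ j₀ ∈ S, Θ i j₀
  swap
  · exact ⟨i, hi, fun j hj hij => hsink ⟨j, hj, hij⟩⟩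
  obtain ⟨j₀, hj₀, hij₀⟩ := hsink
  have hj₀i : j₀ ≠ i := by rintro rfl; exact hΘ.2 _ _ hij₀ hij₀
  obtain ⟨k, hk, hk_sink⟩ :=
    ih _ (Finset.erase_ssubset hi) ⟨j₀, Finset.mem_erase.2 ⟨hj₀i, hj₀⟩⟩
  refine ⟨k, Finset.mem_of_mem_erase hk, fun j hj hkj => ?_⟩
  obtain rfl | hji := eq_or_ne j i
  · -- `k → j` and `j → j₀` are edges at the leaf `j` of `S`
    have hkj₀ : k = j₀ := hleaf ⟨(hΘ.1 _ _).2 (.inr hkj), Finset.mem_of_mem_erase hk⟩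
      ⟨(hΘ.1 _ _).2 (.inl hij₀), hj₀⟩
    exact hΘ.2 _ _ hij₀ (hkj₀ ▸ hkj)
  · exact hk_sink j (Finset.mem_erase.2 ⟨hji, hj⟩) hkj

/-- For every orientation of a simply laced Dynkin diagram with
`n` vertices, the Kiselman quotient of the 0-Hecke monoid has exactly `2 ^ n`
idempotents. -/
theorem kiselmanQuotient_card_idempotents {V : Type*} [Fintype V] (G : SimpleGraph V)
    (hG : IsSimplyLacedDynkin G) (Θ : V → V → Prop) (hΘ : IsOrientation G Θ) :
    Nat.card {x : HK Θ // x * x = x} = 2 ^ Fintype.card V := by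
  classical
  have hranking : G.HasParentRanking :=
    hasParentRanking_of_forall_connectedComponent fun c => (hG c).hasParentRanking
  have hsinks := hΘ.hasSinks hranking.exists_mem_subsingleton_neighborSet
  calc Nat.card {x : HK Θ // x * x = x}
      _ = Nat.card (Finset V) := Nat.card_congr (HK.idempotentsEquivFinset hsinks)
      _ = 2 ^ Fintype.card V := by rw [Nat.card_eq_fintype_card, Fintype.card_finset]
end

section
/- Let Γ be the Dynkin diagram of type Aₙ with the linear orientation Γ⃗ given by the arrows i → i−1 for i = 2,…,n. Then the assignment ε_i ↦ T_{n+1−i} (for i = 1,…,n) extends to a monoid isomorphism from KH(Γ⃗) onto 𝒞_{n+1}, where T_j ∈ 𝒞_{n+1} is the transformation of {1,…,n+1} sending j+1 to j and fixing all other points. In particular, KH(Γ⃗) is isomorphic to the monoid of all order-preserving and order-decreasing total transformations of {1,…,n+1}. -/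
open FreeMonoid SimpleGraph

/-- The monoid (under composition) of all order-preserving and order-decreasing
total transformations of `Fin m`. -/
def OrderDecMonoid (m : ℕ) : Submonoid (Function.End (Fin m)) where
  carrier := {f | Monotone f ∧ ∀ x, f x ≤ x}
  one_mem' := ⟨monotone_id, fun _ => le_rfl⟩
  mul_mem' := by
    rintro f g ⟨hf₁, hf₂⟩ ⟨hg₁, hg₂⟩
    exact ⟨hf₁.comp hg₁, fun x => (hf₂ (g x)).trans (hg₂ x)⟩

/-- The transformation `T k` of `{0, …, n}` sending the point `k + 1` to `k` and
fixing all other points (in the 1-indexed notation of the paper this is the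
transformation `T (k+1)` of `{1, …, n+1}` sending `k + 2` to `k + 1`). -/
def T {n : ℕ} (k : Fin n) : Function.End (Fin (n + 1)) :=
  fun x => if (x : ℕ) = (k : ℕ) + 1 then k.castSucc else x

/-!
Reindex the generators along `Fin.rev`, so that the arrows point `k → k + 1` and `e k` is to
be sent to `T k`. The `T k` satisfy the defining relations, so `e k ↦ T k` is a homomorphism
into `𝒞_{n+1}`. An order-preserving, order-decreasing `g` is the image of the product over
`t = n, …, 1` of the words `e (g t) * e (g t + 1) * ⋯ * e (t - 1)`, so the map is onto.
Conversely, the Kiselman relations alone show that `e k` times the word attached to `g` is the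
word attached to `T k ∘ g`; by induction on words every element is the word attached to its
image, which gives injectivity.
-/

lemma Function.End.mul_apply {α : Type*} (f g : Function.End α) (x : α) :
    (f * g) x = f (g x) := rfl

lemma Function.End.one_apply {α : Type*} (x : α) : (1 : Function.End α) x = x := rfl

lemma HK.mk'_eq_of_rel {ι : Type*} {Θ : ι → ι → Prop} {u v : FreeMonoid ι}
    (h : HKRel Θ u v) : (conGen (HKRel Θ)).mk' u = (conGen (HKRel Θ)).mk' v :=
  (Con.eq _).2 (ConGen.Rel.of _ _ h)

namespace KiselmanTypeA

section Chain

variable {M N : Type*} [Monoid M] [Monoid N]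

/-- The defining relations of the Kiselman quotient for the path `0 → 1 → 2 → ⋯`. -/
structure IsKiselmanChain (e : ℕ → M) : Prop where
  idem : ∀ k, IsIdempotentElem (e k)
  commute : ∀ {k j}, k + 2 ≤ j → Commute (e k) (e j)
  mul_succ_mul_self : ∀ k, e k * e (k + 1) * e k = e k * e (k + 1)
  succ_mul_mul_succ : ∀ k, e (k + 1) * e k * e (k + 1) = e k * e (k + 1)

def intervalProd (e : ℕ → M) (a b : ℕ) : M :=
  ((List.range' a (b - a)).map e).prod

def normalForm (e : ℕ → M) (g : ℕ → ℕ) : ℕ → M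
  | 0 => 1
  | t + 1 => intervalProd e (g (t + 1)) (t + 1) * normalForm e g t

def collapseNat (k : ℕ) (y : ℕ) : ℕ := if y = k + 1 then k else y

lemma collapseNat_self (k : ℕ) : collapseNat k (k + 1) = k := if_pos rfl

lemma collapseNat_of_ne {k y : ℕ} (h : y ≠ k + 1) : collapseNat k y = y := if_neg h

variable {e : ℕ → M}

lemma intervalProd_of_le {a b : ℕ} (h : b ≤ a) : intervalProd e a b = 1 := by
  simp [intervalProd, Nat.sub_eq_zero_of_le h]

lemma intervalProd_of_lt {a b : ℕ} (h : a < b) :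
    intervalProd e a b = e a * intervalProd e (a + 1) b := by
  rw [intervalProd, show b - a = b - (a + 1) + 1 by omega, List.range'_succ]
  rfl

lemma intervalProd_self_succ (a : ℕ) : intervalProd e a (a + 1) = e a := by
  rw [intervalProd_of_lt a.lt_succ_self, intervalProd_of_le le_rfl, mul_one]

lemma map_intervalProd (f : M →* N) (a b : ℕ) :
    f (intervalProd e a b) = intervalProd (f ∘ e) a b := by
  simp [intervalProd, map_list_prod]

lemma map_normalForm (f : M →* N) (g : ℕ → ℕ) :
    ∀ t, f (normalForm e g t) = normalForm (f ∘ e) g t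
  | 0 => map_one f
  | t + 1 => by rw [normalForm, normalForm, map_mul, map_intervalProd, map_normalForm f g t]

lemma normalForm_congr {g₁ g₂ : ℕ → ℕ} :
    ∀ t, (∀ y ≤ t, g₁ y = g₂ y) → normalForm e g₁ t = normalForm e g₂ t
  | 0, _ => rfl
  | t + 1, h => by
    rw [normalForm, normalForm, h (t + 1) le_rfl,
      normalForm_congr t fun y hy => h y (by omega)]

lemma normalForm_id : ∀ t, normalForm e id t = 1
  | 0 => rfl
  | t + 1 => by rw [normalForm, id, intervalProd_of_le le_rfl, normalForm_id t, one_mul]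

lemma IsKiselmanChain.commute_intervalProd (he : IsKiselmanChain e) {k a : ℕ} (h : k + 2 ≤ a)
    (b : ℕ) : Commute (e k) (intervalProd e a b) :=
  Commute.list_prod_right _ _ fun x hx => by
    obtain ⟨j, hj, rfl⟩ := List.mem_map.1 hx
    exact he.commute (by simp only [List.mem_range'_1] at hj; omega)

lemma IsKiselmanChain.mul_intervalProd_of_mem (he : IsKiselmanChain e) {k b : ℕ} (hkb : k < b) :
    ∀ a ≤ k, e k * intervalProd e a b = intervalProd e a b := by
  intro a hak
  induction h : k - a generalizing a with
  | zero =>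
    obtain rfl : a = k := by omega
    rw [intervalProd_of_lt hkb, ← mul_assoc, (he.idem a).eq]
  | succ d ih =>
    rw [intervalProd_of_lt (by omega : a < b)]
    by_cases hk : k = a + 1
    · subst hk
      rw [intervalProd_of_lt hkb, ← mul_assoc, ← mul_assoc, he.succ_mul_mul_succ, mul_assoc]
    · rw [← mul_assoc, (he.commute (by omega : a + 2 ≤ k)).eq.symm, mul_assoc,
        ih (a + 1) (by omega) (by omega)]

lemma IsKiselmanChain.mul_intervalProd_mul_self (he : IsKiselmanChain e) (k b : ℕ) :
    e k * intervalProd e (k + 1) b * e k = e k * intervalProd e (k + 1) b := by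
  rcases le_or_gt b (k + 1) with hb | hb
  · rw [intervalProd_of_le hb, mul_one, (he.idem k).eq]
  · rw [intervalProd_of_lt hb, mul_assoc, mul_assoc,
      ← (he.commute_intervalProd le_rfl b).eq, ← mul_assoc, ← mul_assoc, he.mul_succ_mul_self,
      mul_assoc]

lemma IsKiselmanChain.commute_of_ne (he : IsKiselmanChain e) {k j : ℕ} (h₁ : k ≠ j + 1)
    (h₂ : j ≠ k + 1) : Commute (e k) (e j) := by
  rcases lt_trichotomy k j with h | rfl | h
  · exact he.commute (by omega)
  · exact Commute.refl _
  · exact (he.commute (by omega)).symm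

lemma IsKiselmanChain.mul_normalForm_of_le (he : IsKiselmanChain e) {g : ℕ → ℕ}
    (hg : Monotone g) {k t : ℕ} (hgk : g t ≤ k) (hkt : k < t) :
    e k * normalForm e g t = normalForm e (collapseNat k ∘ g) t := by
  obtain ⟨s, rfl⟩ : ∃ s, t = s + 1 := ⟨t - 1, by omega⟩
  have hcongr : normalForm e (collapseNat k ∘ g) (s + 1) = normalForm e g (s + 1) :=
    normalForm_congr _ fun y hy => collapseNat_of_ne (by have := hg hy; omega)
  rw [hcongr, normalForm, ← mul_assoc, he.mul_intervalProd_of_mem hkt _ hgk]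

lemma IsKiselmanChain.mul_normalForm (he : IsKiselmanChain e) {g : ℕ → ℕ} (hg : Monotone g)
    (hdec : ∀ y, g y ≤ y) {k t : ℕ} (hkt : k < t) :
    e k * normalForm e g t = normalForm e (collapseNat k ∘ g) t := by
  induction t, hkt using Nat.le_induction with
  | base =>
    rcases (hdec (k + 1)).lt_or_eq with hlt | heq
    · exact he.mul_normalForm_of_le hg (Nat.le_of_lt_succ hlt) (Nat.lt_add_one k)
    · have hcongr : normalForm e (collapseNat k ∘ g) k = normalForm e g k :=
        normalForm_congr k fun y hy => collapseNat_of_ne (by have := hdec y; omega)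
      rw [normalForm, normalForm, Function.comp_apply, heq, collapseNat_self,
        intervalProd_of_le le_rfl, intervalProd_self_succ, hcongr, one_mul]
  | succ t hkt ih =>
    rcases lt_trichotomy (g (t + 1)) (k + 1) with hlt | heq | hgt
    · exact he.mul_normalForm_of_le hg (by omega) (by omega)
    · rw [normalForm, normalForm, Function.comp_apply, heq, collapseNat_self,
        intervalProd_of_lt (by omega : k < t + 1), ← ih, ← mul_assoc, ← mul_assoc,
        he.mul_intervalProd_mul_self]
    · rw [normalForm, normalForm, Function.comp_apply, collapseNat_of_ne (by omega),
        ← mul_assoc, (he.commute_intervalProd (by omega) _).eq, mul_assoc, ih]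

end Chain

section Collapse

variable {m : ℕ}

def collapse (k : ℕ) : Function.End (Fin m) :=
  fun x => if h : (x : ℕ) = k + 1 then ⟨k, by omega⟩ else x

lemma val_collapse (k : ℕ) (x : Fin m) : (collapse k x : ℕ) = collapseNat k x := by
  unfold collapse collapseNat
  split_ifs <;> rfl

lemma T_eq_collapse {n : ℕ} (k : Fin n) : T k = collapse k := by
  funext x
  ext
  simp only [T, val_collapse, collapseNat]
  split_ifs <;> rfl

lemma collapse_of_le {k : ℕ} (h : m ≤ k + 1) : (collapse k : Function.End (Fin m)) = 1 := by
  funext x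
  ext
  rw [val_collapse, collapseNat_of_ne (by omega)]
  rfl

lemma collapse_mem (k : ℕ) : collapse k ∈ OrderDecMonoid m := by
  refine ⟨fun x y hxy => ?_, fun x => ?_⟩ <;>
    simp only [Fin.le_def, val_collapse, collapseNat] at * <;> split_ifs <;> omega

lemma isKiselmanChain_collapse : IsKiselmanChain (collapse : ℕ → Function.End (Fin m)) := by
  refine ⟨fun k => ?_, fun {k j} hkj => ?_, fun k => ?_, fun k => ?_⟩ <;>
    · funext x
      ext
      simp only [Function.End.mul_apply, val_collapse, collapseNat]
      split_ifs <;> omega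

lemma val_intervalProd_collapse (a b : ℕ) (x : Fin m) :
    (intervalProd collapse a b x : ℕ) = if a < x ∧ x ≤ b then a else x := by
  induction h : b - a generalizing a with
  | zero =>
    rw [intervalProd_of_le (by omega), Function.End.one_apply, if_neg (by omega)]
  | succ d ih =>
    rw [intervalProd_of_lt (by omega), Function.End.mul_apply, val_collapse,
      ih (a + 1) (by omega)]
    simp only [collapseNat]
    split_ifs <;> omega

lemma val_normalForm_collapse {g : ℕ → ℕ} (hg : Monotone g) (hdec : ∀ y, g y ≤ y)
    (t : ℕ) (x : Fin m) : (normalForm collapse g t x : ℕ) = if x ≤ t then g x else x := by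
  induction t with
  | zero =>
    have := hdec x
    rw [normalForm, Function.End.one_apply]
    split_ifs <;> omega
  | succ t ih =>
    rw [normalForm, Function.End.mul_apply, val_intervalProd_collapse, ih]
    have := hdec x
    have := hdec (t + 1)
    have : (x : ℕ) ≤ t + 1 → g x ≤ g (t + 1) := fun h => hg h
    have : (x : ℕ) = t + 1 → g x = g (t + 1) := congrArg g
    split_ifs <;> omega

def natExtend (F : Function.End (Fin m)) (y : ℕ) : ℕ :=
  if h : y < m then F ⟨y, h⟩ else y

lemma natExtend_apply (F : Function.End (Fin m)) (x : Fin m) : natExtend F x = F x :=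
  dif_pos x.isLt

lemma natExtend_one : natExtend (1 : Function.End (Fin m)) = id := by
  funext y
  unfold natExtend
  split_ifs <;> rfl

lemma natExtend_collapse_mul {k : ℕ} (hk : k + 1 < m) (F : Function.End (Fin m)) :
    natExtend (collapse k * F) = collapseNat k ∘ natExtend F := by
  funext y
  simp only [natExtend, Function.comp_apply]
  split_ifs with hy
  · exact val_collapse k (F ⟨y, hy⟩)
  · exact (collapseNat_of_ne (by omega)).symm

lemma monotone_natExtend {F : Function.End (Fin m)} (hF : F ∈ OrderDecMonoid m) :
    Monotone (natExtend F) := by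
  intro x y hxy
  unfold natExtend
  split_ifs with hx hy hy
  · exact hF.1 (show (⟨x, hx⟩ : Fin m) ≤ ⟨y, hy⟩ from hxy)
  · have : (F ⟨x, hx⟩ : ℕ) ≤ x := hF.2 _
    omega
  · omega
  · exact hxy

lemma natExtend_le {F : Function.End (Fin m)} (hF : F ∈ OrderDecMonoid m) (y : ℕ) :
    natExtend F y ≤ y := by
  unfold natExtend
  split_ifs with hy
  · exact hF.2 ⟨y, hy⟩
  · exact le_rfl

lemma normalForm_collapse_natExtend {n : ℕ} {F : Function.End (Fin (n + 1))}
    (hF : F ∈ OrderDecMonoid (n + 1)) : normalForm collapse (natExtend F) n = F := by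
  funext x
  ext
  rw [val_normalForm_collapse (monotone_natExtend hF) (natExtend_le hF),
    if_pos (Nat.le_of_lt_succ x.isLt), natExtend_apply]

end Collapse

variable {n : ℕ}

abbrev typeA (n : ℕ) : Fin n → Fin n → Prop := fun a b => (a : ℕ) = (b : ℕ) + 1

def hkGen (n k : ℕ) : HK (typeA n) :=
  if h : k < n then HK.gen (typeA n) (Fin.rev ⟨k, h⟩) else 1

lemma hkGen_of_lt {k : ℕ} (h : k < n) : hkGen n k = HK.gen (typeA n) (Fin.rev ⟨k, h⟩) :=
  dif_pos h

lemma hkGen_of_le {k : ℕ} (h : n ≤ k) : hkGen n k = 1 := dif_neg (by omega)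

lemma gen_eq_hkGen (i : Fin n) : HK.gen (typeA n) i = hkGen n i.rev := by
  rw [hkGen_of_lt i.rev.isLt, Fin.rev_rev]

lemma isIdempotentElem_hkGen (k : ℕ) : IsIdempotentElem (hkGen n k) := by
  rcases lt_or_ge k n with hk | hk
  · rw [hkGen_of_lt hk]
    exact HK.mk'_eq_of_rel (.idem _)
  · rw [hkGen_of_le hk]
    exact IsIdempotentElem.one

lemma typeA_rev_iff {k j : ℕ} (hk : k < n) (hj : j < n) :
    typeA n (Fin.rev ⟨k, hk⟩) (Fin.rev ⟨j, hj⟩) ↔ j = k + 1 := by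
  simp only [typeA, Fin.val_rev]
  omega

lemma isKiselmanChain_hkGen : IsKiselmanChain (hkGen n) := by
  refine ⟨isIdempotentElem_hkGen, fun {k j} hkj => ?_, fun k => ?_, fun k => ?_⟩
  · rcases lt_or_ge j n with hj | hj
    · rw [hkGen_of_lt hj, hkGen_of_lt (by omega : k < n)]
      exact HK.mk'_eq_of_rel
        (.comm _ _ (by rw [typeA_rev_iff]; omega) (by rw [typeA_rev_iff]; omega))
    · rw [hkGen_of_le hj]
      exact Commute.one_right _
  · rcases lt_or_ge (k + 1) n with hk | hk
    · rw [hkGen_of_lt hk, hkGen_of_lt (by omega : k < n)]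
      exact HK.mk'_eq_of_rel
        (.kisel _ _ ((typeA_rev_iff _ _).2 rfl) (by rw [typeA_rev_iff]; omega))
    · rw [hkGen_of_le hk, mul_one]
      exact isIdempotentElem_hkGen k
  · rcases lt_or_ge (k + 1) n with hk | hk
    · rw [hkGen_of_lt hk, hkGen_of_lt (by omega : k < n)]
      exact HK.mk'_eq_of_rel
        (.kisel' _ _ ((typeA_rev_iff _ _).2 rfl) (by rw [typeA_rev_iff]; omega))
    · rw [hkGen_of_le hk, one_mul, mul_one]

lemma conGen_le_ker :
    conGen (HKRel (typeA n)) ≤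
      Con.ker (FreeMonoid.lift fun i : Fin n => (⟨collapse i.rev, collapse_mem _⟩ :
        OrderDecMonoid (n + 1))) := by
  have he := (isKiselmanChain_collapse (m := n + 1))
  refine Con.conGen_le.2 fun u v h => (Con.ker_rel _).2 (Subtype.ext ?_)
  cases h with
  | idem i => exact (he.idem _).eq
  | comm i j h₁ h₂ =>
    exact he.commute_of_ne (by simp only [typeA, Fin.val_rev] at *; omega)
      (by simp only [typeA, Fin.val_rev] at *; omega)
  | braid i j h₁ h₂ => simp only [typeA] at h₁ h₂; omega
  | kisel i j h₁ _ =>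
    have hij : (j.rev : ℕ) = i.rev + 1 := by simp only [typeA, Fin.val_rev] at *; omega
    simp only [map_mul, FreeMonoid.lift_eval_of, Submonoid.coe_mul, hij]
    exact he.mul_succ_mul_self _
  | kisel' i j h₁ _ =>
    have hij : (j.rev : ℕ) = i.rev + 1 := by simp only [typeA, Fin.val_rev] at *; omega
    simp only [map_mul, FreeMonoid.lift_eval_of, Submonoid.coe_mul, hij]
    exact he.succ_mul_mul_succ _

def toOrderDec (n : ℕ) : HK (typeA n) →* OrderDecMonoid (n + 1) :=
  (conGen (HKRel (typeA n))).lift _ conGen_le_ker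

def toEnd (n : ℕ) : HK (typeA n) →* Function.End (Fin (n + 1)) :=
  (OrderDecMonoid (n + 1)).subtype.comp (toOrderDec n)

lemma toEnd_mem (q : HK (typeA n)) : toEnd n q ∈ OrderDecMonoid (n + 1) :=
  (toOrderDec n q).2

lemma toEnd_hkGen (k : ℕ) : toEnd n (hkGen n k) = collapse k := by
  rcases lt_or_ge k n with hk | hk
  · rw [hkGen_of_lt hk, toEnd, MonoidHom.comp_apply, HK.gen, toOrderDec, Con.lift_mk',
      FreeMonoid.lift_eval_of]
    simp only [Submonoid.coe_subtype, Fin.rev_rev]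
  · rw [hkGen_of_le hk, map_one, collapse_of_le (by omega)]

lemma toEnd_normalForm (g : ℕ → ℕ) (t : ℕ) :
    toEnd n (normalForm (hkGen n) g t) = normalForm collapse g t := by
  rw [map_normalForm]
  congr 1
  funext k
  exact toEnd_hkGen k

lemma eq_normalForm_natExtend_toEnd (q : HK (typeA n)) :
    q = normalForm (hkGen n) (natExtend (toEnd n q)) n := by
  obtain ⟨u, rfl⟩ := Con.mk'_surjective q
  induction u using FreeMonoid.inductionOn' with
  | one => rw [map_one, map_one, natExtend_one, normalForm_id]
  | of_mul i u ih =>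
    set q := (conGen (HKRel (typeA n))).mk' u
    have hq := toEnd_mem q
    have hmul : (conGen (HKRel (typeA n))).mk' (of i * u) = hkGen n i.rev * q := by
      rw [map_mul, ← gen_eq_hkGen]
      rfl
    rw [hmul, map_mul, toEnd_hkGen, natExtend_collapse_mul (by omega),
      ← isKiselmanChain_hkGen.mul_normalForm (monotone_natExtend hq) (natExtend_le hq)
        (by omega), ← ih]

lemma toOrderDec_bijective : Function.Bijective (toOrderDec n) := by
  refine ⟨fun q₁ q₂ h => ?_, fun F => ?_⟩
  · rw [eq_normalForm_natExtend_toEnd q₁, eq_normalForm_natExtend_toEnd q₂, toEnd,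
      MonoidHom.comp_apply, h]
    rfl
  · refine ⟨normalForm (hkGen n) (natExtend (F : Function.End (Fin (n + 1)))) n, ?_⟩
    exact Subtype.ext ((toEnd_normalForm _ n).trans (normalForm_collapse_natExtend F.2))

lemma coe_toOrderDec_gen (i : Fin n) :
    (toOrderDec n (HK.gen (typeA n) i) : Function.End (Fin (n + 1))) = T i.rev := by
  rw [gen_eq_hkGen, T_eq_collapse, ← toEnd_hkGen]
  rfl

end KiselmanTypeA

theorem kiselmanQuotient_typeA_iso_orderDec_general (n : ℕ) :
    ∃ φ : HK (fun a b : Fin n => (a : ℕ) = (b : ℕ) + 1) ≃* OrderDecMonoid (n + 1),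
      ∀ m : Fin n,
        (φ (HK.gen (fun a b : Fin n => (a : ℕ) = (b : ℕ) + 1) m) :
          Function.End (Fin (n + 1))) = T m.rev :=
  ⟨MulEquiv.ofBijective _ KiselmanTypeA.toOrderDec_bijective, KiselmanTypeA.coe_toOrderDec_gen⟩

/-- Let `Γ⃗` be the type `A n` Dynkin diagram with vertices
`1, …, n` (here indexed by `Fin n`, vertex `i+1` corresponding to `i : Fin n`)
and the linear orientation with arrows `i → i - 1`. Then `ε i ↦ T (n + 1 - i)`
(in 0-indexed notation `HK.gen i ↦ T i.rev`) extends to a monoid isomorphism from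
the Kiselman quotient of the 0-Hecke monoid onto the monoid `𝒞 (n+1)` of all
order-preserving and order-decreasing total transformations of `{1, …, n+1}`. -/
theorem kiselmanQuotient_typeA_iso_orderDec (n : ℕ) (hn : 1 ≤ n) :
    ∃ φ : HK (fun a b : Fin n => (a : ℕ) = (b : ℕ) + 1) ≃* OrderDecMonoid (n + 1),
      ∀ m : Fin n,
        (φ (HK.gen (fun a b : Fin n => (a : ℕ) = (b : ℕ) + 1) m) :
          Function.End (Fin (n + 1))) = T m.rev :=
  kiselmanQuotient_typeA_iso_orderDec_general n
end

section
/- Let Θ and Φ be anti-reflexive binary relations on finite sets N and M respectively, and let f : N → M be an injective map such that for all i, j ∈ N, Θ(i,j) holds if and only if Φ(f(i), f(j)) holds (a full embedding of mixed graphs). Then the map e_i ↦ e_{f(i)} extends uniquely to an injective monoid homomorphism from HK(Θ) into HK(Φ). -/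
open FreeMonoid SimpleGraph

/-!
The canonical map has a left inverse: the retraction `HK(Φ) → HK(Θ)` sending `e (f i)` to `e i`
and every generator outside the image of `f` to `1`. It is well defined because fullness of `f`
makes the relations among the `e (f i)` exactly those among the `e i`.
-/

namespace HK

variable {ι : Type*} {Θ : ι → ι → Prop} {P : Type*} [Monoid P]

structure IsFamily (Θ : ι → ι → Prop) (x : ι → P) : Prop where
  idem : ∀ i, x i * x i = x i
  comm : ∀ i j, ¬ Θ i j → ¬ Θ j i → x i * x j = x j * x i
  braid : ∀ i j, Θ i j → Θ j i → x i * x j * x i = x j * x i * x j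
  kisel : ∀ i j, Θ i j → ¬ Θ j i → x i * x j * x i = x i * x j
  kisel' : ∀ i j, Θ i j → ¬ Θ j i → x j * x i * x j = x i * x j

lemma isFamily_gen (Θ : ι → ι → Prop) : IsFamily Θ (gen Θ) := by
  have sound {a b : FreeMonoid ι} (h : HKRel Θ a b) :
      (conGen (HKRel Θ)).mk' a = (conGen (HKRel Θ)).mk' b :=
    (Con.eq _).2 (ConGen.Rel.of _ _ h)
  refine ⟨fun i => ?_, fun i j h₁ h₂ => ?_, fun i j h₁ h₂ => ?_, fun i j h₁ h₂ => ?_,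
    fun i j h₁ h₂ => ?_⟩ <;> simp only [gen, ← map_mul]
  exacts [sound (.idem i), sound (.comm i j h₁ h₂), sound (.braid i j h₁ h₂),
    sound (.kisel i j h₁ h₂), sound (.kisel' i j h₁ h₂)]

def lift (x : ι → P) (hx : IsFamily Θ x) : HK Θ →* P :=
  Con.lift _ (FreeMonoid.lift x) <| Con.conGen_le.2 <| by
    rintro a b (⟨i⟩ | ⟨i, j, h₁, h₂⟩ | ⟨i, j, h₁, h₂⟩ | ⟨i, j, h₁, h₂⟩ | ⟨i, j, h₁, h₂⟩) <;>
      simp only [Con.ker_rel, map_mul, FreeMonoid.lift_eval_of]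
    exacts [hx.idem i, hx.comm i j h₁ h₂, hx.braid i j h₁ h₂, hx.kisel i j h₁ h₂,
      hx.kisel' i j h₁ h₂]

@[simp]
lemma lift_gen (x : ι → P) (hx : IsFamily Θ x) (i : ι) : lift x hx (gen Θ i) = x i := by
  simp [lift, gen]

lemma hom_ext {ψ₁ ψ₂ : HK Θ →* P} (h : ∀ i, ψ₁ (gen Θ i) = ψ₂ (gen Θ i)) : ψ₁ = ψ₂ := by
  have : ψ₁.comp (conGen (HKRel Θ)).mk' = ψ₂.comp (conGen (HKRel Θ)).mk' :=
    FreeMonoid.hom_eq h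
  ext x
  exact DFunLike.congr_fun this (FreeMonoid.of x)

variable {κ : Type*} {Φ : κ → κ → Prop} {f : ι → κ}

lemma IsFamily.comp {x : κ → P} (hx : IsFamily Φ x) (hfull : ∀ i j, Θ i j ↔ Φ (f i) (f j)) :
    IsFamily Θ (x ∘ f) where
  idem i := hx.idem (f i)
  comm i j h₁ h₂ := hx.comm _ _ (mt (hfull i j).2 h₁) (mt (hfull j i).2 h₂)
  braid i j h₁ h₂ := hx.braid _ _ ((hfull i j).1 h₁) ((hfull j i).1 h₂)
  kisel i j h₁ h₂ := hx.kisel _ _ ((hfull i j).1 h₁) (mt (hfull j i).2 h₂)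
  kisel' i j h₁ h₂ := hx.kisel' _ _ ((hfull i j).1 h₁) (mt (hfull j i).2 h₂)

/-- Extending a family by `1` off the image of a full embedding preserves the relations:
a relation involving a vertex outside the image collapses to `1 = 1` or to idempotency. -/
lemma IsFamily.extend_one {x : ι → P} (hx : IsFamily Θ x) (hf : Function.Injective f)
    (hfull : ∀ i j, Θ i j ↔ Φ (f i) (f j)) : IsFamily Φ (Function.extend f x 1) := by
  have mem_or_one (a : κ) : (∃ i, a = f i) ∨ Function.extend f x 1 a = 1 := by
    by_cases h : ∃ i, f i = a
    · exact .inl (h.imp fun _ => Eq.symm)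
    · exact .inr (Function.extend_apply' _ _ _ h)
  refine ⟨fun a => ?_, fun a b h₁ h₂ => ?_, fun a b h₁ h₂ => ?_, fun a b h₁ h₂ => ?_,
    fun a b h₁ h₂ => ?_⟩ <;>
    rcases mem_or_one a with ⟨i, rfl⟩ | ha <;> try rcases mem_or_one b with ⟨j, rfl⟩ | hb
  all_goals simp only [hf.extend_apply, *, one_mul, mul_one, hx.idem]
  all_goals simp only [← hfull] at h₁ h₂
  exacts [hx.comm i j h₁ h₂, hx.braid i j h₁ h₂, hx.kisel i j h₁ h₂, hx.kisel' i j h₁ h₂]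

end HK

theorem heckeKiselman_canonical_injection_general {N M : Type*}
    (Θ : N → N → Prop)
    (Φ : M → M → Prop)
    (f : N → M) (hf : Function.Injective f)
    (hfull : ∀ i j, Θ i j ↔ Φ (f i) (f j)) :
    ∃ φ : HK Θ →* HK Φ,
      (∀ i, φ (HK.gen Θ i) = HK.gen Φ (f i)) ∧
      Function.Injective φ ∧
      ∀ ψ : HK Θ →* HK Φ, (∀ i, ψ (HK.gen Θ i) = HK.gen Φ (f i)) → ψ = φ := by
  let φ := HK.lift (HK.gen Φ ∘ f) ((HK.isFamily_gen Φ).comp hfull)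
  let ρ := HK.lift (Function.extend f (HK.gen Θ) 1) ((HK.isFamily_gen Θ).extend_one hf hfull)
  have hρφ : ρ.comp φ = MonoidHom.id (HK Θ) :=
    HK.hom_ext fun i => by simp [φ, ρ, hf.extend_apply]
  refine ⟨φ, HK.lift_gen _ _, ?_, fun ψ hψ => HK.hom_ext fun i => by simp [φ, hψ]⟩
  exact Function.LeftInverse.injective (g := ρ) (DFunLike.congr_fun hρφ)

/-- If `f` is a full embedding of the mixed graph of `Θ` into the
mixed graph of `Φ`, then `e i ↦ e (f i)` extends uniquely to a monoid homomorphism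
`HK(Θ) → HK(Φ)`, and this homomorphism is injective. -/
theorem heckeKiselman_canonical_injection {N M : Type*} [Finite N] [Finite M]
    (Θ : N → N → Prop) (hΘ : ∀ i, ¬ Θ i i)
    (Φ : M → M → Prop) (hΦ : ∀ i, ¬ Φ i i)
    (f : N → M) (hf : Function.Injective f)
    (hfull : ∀ i j, Θ i j ↔ Φ (f i) (f j)) :
    ∃ φ : HK Θ →* HK Φ,
      (∀ i, φ (HK.gen Θ i) = HK.gen Φ (f i)) ∧
      Function.Injective φ ∧
      ∀ ψ : HK Θ →* HK Φ, (∀ i, ψ (HK.gen Θ i) = HK.gen Φ (f i)) → ψ = φ :=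
  heckeKiselman_canonical_injection_general Θ Φ f hf hfull
end

section
/- Let Γ⃗ be an orientation of a simply laced Dynkin diagram Γ with vertex set Γ₀, and let V be the free abelian group with basis {v_i : i ∈ Γ₀}. For i ∈ Γ₀ let θ_i be the group endomorphism of V determined by θ_i(v_j) = v_j for j ≠ i and θ_i(v_i) = Σ_{k : k → i in Γ⃗} v_k. Then the assignment ε_i ↦ θ_i extends uniquely to a monoid homomorphism from KH(Γ⃗) to the monoid End_ℤ(V) of group endomorphisms of V under composition. -/
open FreeMonoid SimpleGraph

/-!
The Kiselman quotient is a presented monoid whose generators are the `ε i`, so a homomorphism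
with `ε i ↦ θ i` is unique if it exists, and it exists once the `θ i` satisfy the defining
relations. Each relation is an identity of endomorphisms of a free abelian group, checked on the
basis vectors `v m`. Two facts do all the work: `θ t` fixes `v j` for `j ≠ t`, and it fixes
`∑_{k → i} v k` whenever there is no arrow `t → i`. As an orientation has neither loops nor
2-cycles, the braid relations never occur.
-/

theorem HK.existsUnique_hom {ι M : Type*} [Monoid M] {Θ : ι → ι → Prop} (f : ι → M)
    (idem : ∀ i, f i * f i = f i)
    (comm : ∀ i j, ¬ Θ i j → ¬ Θ j i → f i * f j = f j * f i)
    (braid : ∀ i j, Θ i j → Θ j i → f i * f j * f i = f j * f i * f j)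
    (kisel : ∀ i j, Θ i j → ¬ Θ j i → f i * f j * f i = f i * f j)
    (kisel' : ∀ i j, Θ i j → ¬ Θ j i → f j * f i * f j = f i * f j) :
    ∃! Φ : HK Θ →* M, ∀ i, Φ (HK.gen Θ i) = f i := by
  have hf : ∀ a b, HKRel Θ a b → FreeMonoid.lift f a = FreeMonoid.lift f b := by
    intro a b h
    cases h <;> simp only [map_mul, FreeMonoid.lift_eval_of] <;> solve_by_elim
  exact ⟨PresentedMonoid.lift f hf, fun _ => rfl,
    fun Ψ hΨ => PresentedMonoid.toMonoid.unique f hf Ψ hΨ⟩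

theorem Finsupp.addMonoidEnd_ext_int {V : Type*} {f g : AddMonoid.End (V →₀ ℤ)}
    (h : ∀ j, f (Finsupp.single j 1) = g (Finsupp.single j 1)) : f = g :=
  Finsupp.addHom_ext' fun j => AddMonoidHom.ext_int (h j)

section InNeighbourSum

variable {V : Type*} [Fintype V] {Θ : V → V → Prop}

open scoped Classical in
noncomputable def inNeighbourSum (Θ : V → V → Prop) (i : V) : V →₀ ℤ :=
  ∑ k : V, if Θ k i then Finsupp.single k 1 else 0

open scoped Classical in
theorem map_inNeighbourSum {M F : Type*} [AddCommMonoid M] [FunLike F (V →₀ ℤ) M]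
    [AddMonoidHomClass F (V →₀ ℤ) M] (φ : F) (i : V) :
    φ (inNeighbourSum Θ i) = ∑ k : V, if Θ k i then φ (Finsupp.single k 1) else 0 := by
  rw [inNeighbourSum, map_sum]
  exact Finset.sum_congr rfl fun k _ => by split_ifs <;> simp

variable {θ : V → AddMonoid.End (V →₀ ℤ)}
  (hθ₁ : ∀ i j : V, j ≠ i → θ i (Finsupp.single j 1) = Finsupp.single j 1)
  (hθ₂ : ∀ i : V, θ i (Finsupp.single i 1) = inNeighbourSum Θ i)
include hθ₁

theorem apply_inNeighbourSum_of_not_rel {t i : V} (h : ¬ Θ t i) :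
    θ t (inNeighbourSum Θ i) = inNeighbourSum Θ i := by
  classical
  rw [map_inNeighbourSum, inNeighbourSum]
  exact Finset.sum_congr rfl fun k _ => by
    split_ifs with hk
    · exact hθ₁ t k fun hkt => h (hkt ▸ hk)
    · rfl

include hθ₂

theorem theta_mul_self (hΘ : ∀ i j, Θ i j → ¬ Θ j i) (i : V) : θ i * θ i = θ i := by
  refine Finsupp.addMonoidEnd_ext_int fun m => ?_
  rw [AddMonoid.End.coe_mul, Function.comp_apply]
  by_cases hm : m = i
  · subst hm
    rw [hθ₂, apply_inNeighbourSum_of_not_rel hθ₁ fun h => hΘ m m h h]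
  · rw [hθ₁ i m hm, hθ₁ i m hm]

theorem theta_commute {i j : V} (hij : ¬ Θ i j) (hji : ¬ Θ j i) : θ i * θ j = θ j * θ i := by
  refine Finsupp.addMonoidEnd_ext_int fun m => ?_
  simp only [AddMonoid.End.coe_mul, Function.comp_apply]
  by_cases hmi : m = i <;> by_cases hmj : m = j
  · subst hmi hmj; rfl
  · subst hmi
    rw [hθ₁ j m hmj, hθ₂, apply_inNeighbourSum_of_not_rel hθ₁ hji]
  · subst hmj
    rw [hθ₁ i m hmi, hθ₂, apply_inNeighbourSum_of_not_rel hθ₁ hij]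
  · rw [hθ₁ i m hmi, hθ₁ j m hmj, hθ₁ i m hmi]

theorem theta_kiselman (hΘ : ∀ i j, Θ i j → ¬ Θ j i) {i j : V} (hij : Θ i j) :
    θ i * θ j * θ i = θ i * θ j := by
  refine Finsupp.addMonoidEnd_ext_int fun m => ?_
  simp only [AddMonoid.End.coe_mul, Function.comp_apply]
  by_cases hmi : m = i
  · subst hmi
    rw [hθ₂, apply_inNeighbourSum_of_not_rel hθ₁ (hΘ m j hij),
      hθ₁ j m (by rintro rfl; exact hΘ m m hij hij),
      apply_inNeighbourSum_of_not_rel hθ₁ fun h => hΘ m m h h, hθ₂]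
  · rw [hθ₁ i m hmi]

theorem theta_kiselman' (hΘ : ∀ i j, Θ i j → ¬ Θ j i) {i j : V} (hij : Θ i j) :
    θ j * θ i * θ j = θ i * θ j := by
  classical
  refine Finsupp.addMonoidEnd_ext_int fun m => ?_
  simp only [AddMonoid.End.coe_mul, Function.comp_apply]
  by_cases hmj : m = j
  · subst hmj
    rw [hθ₂, ← Function.comp_apply (f := θ m), ← AddMonoid.End.coe_mul, map_inNeighbourSum,
      map_inNeighbourSum]
    -- for an arrow `k → m`, `θ i (v k)` is `v k` with `k ≠ m`, or `∑_{l → i} v l` with `m ↛ i`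
    refine Finset.sum_congr rfl fun k _ => ?_
    split_ifs with hkm
    · rw [AddMonoid.End.coe_mul, Function.comp_apply]
      by_cases hki : k = i
      · subst hki
        rw [hθ₂, apply_inNeighbourSum_of_not_rel hθ₁ (hΘ k m hij)]
      · rw [hθ₁ i k hki, hθ₁ m k (by rintro rfl; exact hΘ k k hkm hkm)]
    · rfl
  · rw [hθ₁ j m hmj]
    by_cases hmi : m = i
    · subst hmi
      rw [hθ₂, apply_inNeighbourSum_of_not_rel hθ₁ (hΘ m j hij)]
    · rw [hθ₁ i m hmi, hθ₁ j m hmj]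

end InNeighbourSum

open scoped Classical in
theorem kiselmanQuotient_linear_representation_general {V : Type*} [Fintype V]
    (G : SimpleGraph V)
    (Θ : V → V → Prop) (hΘ : IsOrientation G Θ)
    (θ : V → AddMonoid.End (V →₀ ℤ))
    (hθ₁ : ∀ i j : V, j ≠ i → θ i (Finsupp.single j 1) = Finsupp.single j 1)
    (hθ₂ : ∀ i : V,
      θ i (Finsupp.single i 1) = ∑ k : V, if Θ k i then Finsupp.single k 1 else 0) :
    ∃! Φ : HK Θ →* AddMonoid.End (V →₀ ℤ), ∀ i, Φ (HK.gen Θ i) = θ i := by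
  have hasymm : ∀ i j, Θ i j → ¬ Θ j i := hΘ.2
  exact HK.existsUnique_hom θ (theta_mul_self hθ₁ hθ₂ hasymm)
    (fun _ _ => theta_commute hθ₁ hθ₂)
    (fun i j hij hji => absurd hji (hasymm i j hij))
    (fun _ _ hij _ => theta_kiselman hθ₁ hθ₂ hasymm hij)
    (fun _ _ hij _ => theta_kiselman' hθ₁ hθ₂ hasymm hij)

open scoped Classical in
/-- Let `Θ` be an orientation of a simply laced Dynkin diagram and
let `V = ⨁_{i ∈ Γ₀} ℤ vᵢ` be the free abelian group on the vertex set (here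
`Γ₀ →₀ ℤ`, with `vᵢ = single i 1`). If `θ i` is the group endomorphism of `V` with
`θ i (v j) = v j` for `j ≠ i` and `θ i (v i) = ∑_{k → i} v k`, then `ε i ↦ θ i`
extends uniquely to a monoid homomorphism from the Kiselman quotient of the 0-Hecke
monoid to `End_ℤ(V)` under composition. -/
theorem kiselmanQuotient_linear_representation {V : Type*} [Fintype V]
    (G : SimpleGraph V) (hG : IsSimplyLacedDynkin G)
    (Θ : V → V → Prop) (hΘ : IsOrientation G Θ)
    (θ : V → AddMonoid.End (V →₀ ℤ))
    (hθ₁ : ∀ i j : V, j ≠ i → θ i (Finsupp.single j 1) = Finsupp.single j 1)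
    (hθ₂ : ∀ i : V,
      θ i (Finsupp.single i 1) = ∑ k : V, if Θ k i then Finsupp.single k 1 else 0) :
    ∃! Φ : HK Θ →* AddMonoid.End (V →₀ ℤ), ∀ i, Φ (HK.gen Θ i) = θ i :=
  kiselmanQuotient_linear_representation_general G Θ hΘ θ hθ₁ hθ₂
end

section
/- Let Θ : KH(Γ⃗) → End_ℤ(V) be the monoid homomorphism determined by Θ(ε_i) = θ_i. Then for every α ∈ KH(Γ⃗), the matrix of Θ(α) with respect to the basis {v_i : i ∈ Γ₀} has all entries equal to 0 or 1; that is, for every j ∈ Γ₀, Θ(α)(v_j) is a sum of pairwise distinct basis vectors. Moreover, Θ(α)(v_j) is a {0,1}-linear combination of those v_k for which there is a directed path from k to j in Γ⃗. -/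
open FreeMonoid SimpleGraph

/-!
Every simply laced Dynkin diagram is a forest, and in an oriented forest a vertex reaching `j`
does so through a unique out-neighbour (two of them would give two paths to `j`), and there are
no directed cycles. By induction on a word `w` in the generators, `Φ w (v j) = ∑ k ∈ S, v k` for
a set `S` of vertices reaching `j` that is an antichain for reachability: applying `θ i` with
`i ∈ S` replaces `i` by its in-neighbours, which are new (none lies in the antichain), reach `j`,
and by the uniqueness above still form an antichain together with `S \ {i}`.
-/

open Relation

namespace SimpleGraph

variable {V : Type*} {G : SimpleGraph V}

/-- On a cycle, a vertex of maximal rank has two distinct neighbours of lower rank. -/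
theorem isAcyclic_of_injective_of_lower_neighbor_unique {f : V → ℕ} (hf : Function.Injective f)
    (hlow : ∀ m x y, G.Adj m x → G.Adj m y → f x < f m → f y < f m → x = y) :
    G.IsAcyclic := by
  classical
  intro v c hc
  obtain ⟨m, hm, hmax⟩ := c.support.toFinset.exists_max_image f ⟨v, by simp⟩
  rw [List.mem_toFinset] at hm
  have hc' := hc.rotate hm
  set c' := c.rotate m hm
  have hnil : ¬ c'.Nil := hc'.not_nil
  have hlt : ∀ u ∈ c'.support, G.Adj m u → f u < f m := fun u hu hmu =>
    (hmax u (by simpa [c'] using hu)).lt_of_ne (hf.ne hmu.ne.symm)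
  exact hc'.snd_ne_penultimate <| hlow m _ _ (c'.adj_snd hnil) (c'.adj_penultimate hnil).symm
    (hlt _ (c'.getVert_mem_support 1) (c'.adj_snd hnil))
    (hlt _ (c'.getVert_mem_support _) (c'.adj_penultimate hnil).symm)

theorem isAcyclic_of_forall_isAcyclic_induce_supp
    (h : ∀ c : G.ConnectedComponent, (G.induce c.supp).IsAcyclic) : G.IsAcyclic := by
  classical
  intro v p hp
  have hsupp : ∀ x ∈ p.support, x ∈ (G.connectedComponentMk v).supp := fun x hx =>
    ConnectedComponent.eq.mpr (p.dropUntil x hx).reachable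
  exact h _ (p.induce _ hsupp) <|
    (Walk.isCycle_map_iff_of_injective (Embedding.induce (G := G) _).injective).mp
      (by rwa [Walk.map_induce])

theorem isAcyclic_pathGraph (n : ℕ) : (pathGraph n).IsAcyclic :=
  isAcyclic_of_injective_of_lower_neighbor_unique (f := fun i : Fin n => (i : ℕ))
    Fin.val_injective fun m x y hx hy lx ly => by
      rw [pathGraph_adj] at hx hy
      exact Fin.ext (by omega)

/-- A path on `1, …, n - 1` with the extra vertex `0` attached to `c`; `typeD n` and `typeE n`
are the cases `c = 2, 3`. Ranking `0` just above `c` leaves `c - 1` as the only lower neighbour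
of `c`. -/
theorem isAcyclic_fromRel_pendant (n c : ℕ) :
    (fromRel fun i j : Fin n =>
      ((i : ℕ) + 1 = j ∧ 1 ≤ (i : ℕ)) ∨ ((i : ℕ) = 0 ∧ (j : ℕ) = c)).IsAcyclic := by
  refine isAcyclic_of_injective_of_lower_neighbor_unique
    (f := fun i : Fin n => if (i : ℕ) = 0 then 2 * c + 1 else 2 * i) ?_ ?_
  · intro x y h
    dsimp only at h
    exact Fin.ext (by split_ifs at h <;> omega)
  · intro m x y hx hy lx ly
    obtain ⟨-, hx⟩ := (fromRel_adj _ _ _).mp hx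
    obtain ⟨-, hy⟩ := (fromRel_adj _ _ _).mp hy
    exact Fin.ext (by split_ifs at lx ly <;> omega)

end SimpleGraph

theorem IsADE.isAcyclic {V : Type*} {G : SimpleGraph V} (h : IsADE G) : G.IsAcyclic := by
  rcases h with ⟨n, -, ⟨e⟩⟩ | ⟨n, -, ⟨e⟩⟩ | ⟨n, -, ⟨e⟩⟩
  · exact e.isAcyclic_iff.mpr (isAcyclic_pathGraph n)
  · exact e.isAcyclic_iff.mpr (isAcyclic_fromRel_pendant n 2)
  · exact e.isAcyclic_iff.mpr (isAcyclic_fromRel_pendant n 3)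

theorem IsSimplyLacedDynkin.isAcyclic {V : Type*} {G : SimpleGraph V}
    (hG : IsSimplyLacedDynkin G) : G.IsAcyclic :=
  isAcyclic_of_forall_isAcyclic_induce_supp fun c => (hG c).isAcyclic

namespace IsOrientation

variable {V : Type*} {G : SimpleGraph V} {Θ : V → V → Prop}

theorem adj (hΘ : IsOrientation G Θ) {x y : V} (h : Θ x y) : G.Adj x y :=
  (hΘ.1 x y).mpr (Or.inl h)

theorem exists_walk (hΘ : IsOrientation G Θ) {x y : V} (h : ReflTransGen Θ x y) :
    ∃ p : G.Walk x y, ∀ d ∈ p.darts, Θ d.fst d.snd := by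
  induction h using ReflTransGen.head_induction_on with
  | refl => exact ⟨.nil, by simp⟩
  | head hxa _ ih =>
    obtain ⟨p, hp⟩ := ih
    exact ⟨.cons (hΘ.adj hxa) p, by simpa [hxa] using hp⟩

/-- Consecutive darts of a directed walk never traverse the same edge back and forth, and in a
forest such walks are paths. -/
theorem isPath_of_forall_darts (hΘ : IsOrientation G Θ) (hA : G.IsAcyclic) {x y : V}
    (p : G.Walk x y) (hp : ∀ d ∈ p.darts, Θ d.fst d.snd) : p.IsPath := by
  rw [hA.isPath_iff_isChain, Walk.edges, List.isChain_map]
  refine p.isChain_dartAdj_darts.imp_of_mem_imp fun d d' hd hd' (hdd' : d.snd = d'.fst) he => ?_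
  rcases (dart_edge_eq_iff d d').mp he with rfl | rfl
  · exact d.adj.ne hdd'.symm
  · exact hΘ.2 _ _ (hp _ hd') (hp _ hd)

theorem exists_isPath_cons (hΘ : IsOrientation G Θ) (hA : G.IsAcyclic) {x y z : V}
    (hxy : Θ x y) (hyz : ReflTransGen Θ y z) :
    ∃ p : G.Walk y z, (Walk.cons (hΘ.adj hxy) p).IsPath := by
  obtain ⟨p, hp⟩ := hΘ.exists_walk hyz
  exact ⟨p, hΘ.isPath_of_forall_darts hA _ (by simpa [hxy] using hp)⟩

theorem not_reflTransGen_of_rel (hΘ : IsOrientation G Θ) (hA : G.IsAcyclic) {x y : V}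
    (hxy : Θ x y) : ¬ ReflTransGen Θ y x := fun hyx => by
  obtain ⟨p, hp⟩ := hΘ.exists_isPath_cons hA hxy hyx
  exact Walk.not_nil_cons (Walk.isPath_iff_nil.mp hp)

theorem eq_of_rel_of_reflTransGen (hΘ : IsOrientation G Θ) (hA : G.IsAcyclic) {x a b j : V}
    (hxa : Θ x a) (hxb : Θ x b) (haj : ReflTransGen Θ a j) (hbj : ReflTransGen Θ b j) :
    a = b := by
  obtain ⟨p, hp⟩ := hΘ.exists_isPath_cons hA hxa haj
  obtain ⟨q, hq⟩ := hΘ.exists_isPath_cons hA hxb hbj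
  simpa using congrArg (fun r : G.Path x j => r.1.snd)
    ((hA.subsingleton_path x j).elim ⟨_, hp⟩ ⟨_, hq⟩)

theorem eq_or_reflTransGen_of_rel (hΘ : IsOrientation G Θ) (hA : G.IsAcyclic) {x y i j : V}
    (hxi : Θ x i) (hxy : ReflTransGen Θ x y) (hyj : ReflTransGen Θ y j)
    (hij : ReflTransGen Θ i j) : x = y ∨ ReflTransGen Θ i y := by
  rcases hxy.cases_head with rfl | ⟨a, hxa, hay⟩
  · exact .inl rfl
  · rw [hΘ.eq_of_rel_of_reflTransGen hA hxi hxa hij (hay.trans hyj)]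
    exact .inr hay

theorem isAntichain_diff_union (hΘ : IsOrientation G Θ) (hA : G.IsAcyclic) {s : Set V}
    {i j : V} (hs : IsAntichain (ReflTransGen Θ) s) (hsj : ∀ k ∈ s, ReflTransGen Θ k j)
    (hi : i ∈ s) : IsAntichain (ReflTransGen Θ) (s \ {i} ∪ {k | Θ k i}) := by
  rintro x (⟨hxs, hxi⟩ | hxi) y (⟨hys, hyi⟩ | hyi) hne hxy
  · exact hs hxs hys hne hxy
  · exact hs hxs hi hxi (hxy.tail hyi)
  · obtain rfl | hiy := hΘ.eq_or_reflTransGen_of_rel hA hxi hxy (hsj y hys) (hsj i hi)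
    exacts [hne rfl, hs hi hys (Ne.symm hyi) hiy]
  · obtain rfl | hiy := hΘ.eq_or_reflTransGen_of_rel hA hxi hxy (.single hyi) .refl
    exacts [hne rfl, hΘ.not_reflTransGen_of_rel hA hyi hiy]

end IsOrientation

section Representation

variable {V : Type*}

theorem map_sum_single_of_notMem {f : AddMonoid.End (V →₀ ℤ)} {i : V} {S : Finset V}
    (hf : ∀ k, k ≠ i → f (Finsupp.single k 1) = Finsupp.single k 1) (hi : i ∉ S) :
    f (∑ k ∈ S, Finsupp.single k 1) = ∑ k ∈ S, Finsupp.single k 1 := by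
  rw [map_sum]
  exact Finset.sum_congr rfl fun k hk => hf k (ne_of_mem_of_not_mem hk hi)

theorem map_sum_single_of_mem [DecidableEq V] {f : AddMonoid.End (V →₀ ℤ)} {i : V}
    {S : Finset V} (hf : ∀ k, k ≠ i → f (Finsupp.single k 1) = Finsupp.single k 1)
    (hi : i ∈ S) :
    f (∑ k ∈ S, Finsupp.single k 1) =
      ∑ k ∈ S.erase i, Finsupp.single k 1 + f (Finsupp.single i 1) := by
  rw [← Finset.sum_erase_add _ _ hi, map_add, map_sum_single_of_notMem hf (S.notMem_erase i)]

theorem sum_single_one_apply [DecidableEq V] (S : Finset V) (k : V) :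
    (∑ m ∈ S, Finsupp.single m (1 : ℤ)) k = if k ∈ S then 1 else 0 := by
  simp [Finsupp.finsetSum_apply, Finsupp.single_apply]

open scoped Classical in
theorem exists_antichain_lift_apply_single [Fintype V] {G : SimpleGraph V}
    {Θ : V → V → Prop} (hΘ : IsOrientation G Θ) (hA : G.IsAcyclic)
    {θ : V → AddMonoid.End (V →₀ ℤ)}
    (hθ₁ : ∀ i j : V, j ≠ i → θ i (Finsupp.single j 1) = Finsupp.single j 1)
    (hθ₂ : ∀ i : V,
      θ i (Finsupp.single i 1) = ∑ k : V, if Θ k i then Finsupp.single k 1 else 0)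
    (j : V) (w : FreeMonoid V) :
    ∃ S : Finset V, (∀ k ∈ S, ReflTransGen Θ k j) ∧ IsAntichain (ReflTransGen Θ) (S : Set V) ∧
      FreeMonoid.lift θ w (Finsupp.single j 1) = ∑ k ∈ S, Finsupp.single k 1 := by
  induction w using FreeMonoid.inductionOn' with
  | one => exact ⟨{j}, fun k hk => Finset.mem_singleton.mp hk ▸ .refl, by simp, by simp⟩
  | of_mul i w ih =>
    obtain ⟨S, hSj, hS, hw⟩ := ih
    rw [map_mul, AddMonoid.End.coe_mul, Function.comp_apply, hw, FreeMonoid.lift_eval_of]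
    by_cases hi : i ∈ S
    · refine ⟨S.erase i ∪ Finset.univ.filter (Θ · i), ?_, ?_, ?_⟩
      · simp only [Finset.mem_union, Finset.mem_erase, Finset.mem_filter, Finset.mem_univ,
          true_and]
        rintro k (⟨-, hk⟩ | hk)
        exacts [hSj k hk, .head hk (hSj i hi)]
      · simpa [Set.sdiff_eq, Set.compl_def] using hΘ.isAntichain_diff_union hA hS hSj hi
      · have hdisj : Disjoint (S.erase i) (Finset.univ.filter (Θ · i)) :=
          Finset.disjoint_left.mpr fun k hk hki => hS (Finset.mem_of_mem_erase hk) hi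
            (Finset.ne_of_mem_erase hk) (.single (by simpa using hki))
        rw [map_sum_single_of_mem (hθ₁ i) hi, hθ₂, ← Finset.sum_filter, Finset.sum_union hdisj]
    · exact ⟨S, hSj, hS, map_sum_single_of_notMem (hθ₁ i) hi⟩

end Representation

open scoped Classical in
/-- Let `Θ : KH(Γ⃗) → End_ℤ(V)` be the linear representation
determined by `Θ(ε i) = θ i` (here called `Φ`, with `V = Γ₀ →₀ ℤ` the free
abelian group on the vertex set and `v i = single i 1`). Then for every element
`α` the matrix of `Φ α` in the basis `{v i}` has all entries `0` or `1`, and the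
`(k, j)` entry can be nonzero only if there is a directed path from `k` to `j`
in `Γ⃗`. -/
theorem kiselmanQuotient_linear_representation_zero_one {V : Type*} [Fintype V]
    (G : SimpleGraph V) (hG : IsSimplyLacedDynkin G)
    (Θ : V → V → Prop) (hΘ : IsOrientation G Θ)
    (θ : V → AddMonoid.End (V →₀ ℤ))
    (hθ₁ : ∀ i j : V, j ≠ i → θ i (Finsupp.single j 1) = Finsupp.single j 1)
    (hθ₂ : ∀ i : V,
      θ i (Finsupp.single i 1) = ∑ k : V, if Θ k i then Finsupp.single k 1 else 0)
    (Φ : HK Θ →* AddMonoid.End (V →₀ ℤ))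
    (hΦ : ∀ i, Φ (HK.gen Θ i) = θ i)
    (α : HK Θ) (j k : V) :
    (Φ α (Finsupp.single j 1) k = 0 ∨ Φ α (Finsupp.single j 1) k = 1) ∧
      (Φ α (Finsupp.single j 1) k ≠ 0 → Relation.ReflTransGen Θ k j) := by
  obtain ⟨w, rfl⟩ := (conGen (HKRel Θ)).mk'_surjective α
  have hlift : Φ.comp (conGen (HKRel Θ)).mk' = FreeMonoid.lift θ :=
    FreeMonoid.hom_eq fun i => (hΦ i).trans (FreeMonoid.lift_eval_of θ i).symm
  obtain ⟨S, hSj, -, hS⟩ := exists_antichain_lift_apply_single hΘ hG.isAcyclic hθ₁ hθ₂ j w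
  rw [← MonoidHom.comp_apply, hlift, hS, sum_single_one_apply]
  split_ifs with hk
  · exact ⟨.inr rfl, fun _ => hSj k hk⟩
  · exact ⟨.inl rfl, fun h => absurd rfl h⟩
end
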